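/- Let A′, A″ be dg algebras with level-3 twisting cochains E′, E″ and set A = A′⊗A″; let E : BA⊗BA → A be the twisting cochain E(a,b) = ε_{B(A,A,A)}(G_a(b)) (with E(1,−) = α) of the construction. If E′ and E″ are normalized, then E is normalized: E([1],1) = E(1,[1]) = 1; E(a,b) = 0 whenever the total bar length k+l > 1 and some entry a_i or b_j equals 1 ∈ A; and E(a,b) lies in the augmentation ideal Ā whenever k+l > 1. -/

import Mathlib

open scoped TensorProduct

noncomputable section

/-- The sign `(-1)^n` as an integer, for `n : ℤ`. -/
def pm (n : ℤ) : ℤ := (((-1 : ℤˣ) ^ n : ℤˣ) : ℤ)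

/-- The total desuspended degree `Σᵢ (nᵢ - 1)` of a list of (cohomological) degrees;
this is the degree of the bar word `[a₁|⋯|a_k]` when `aᵢ` has degree `nᵢ`. -/
def bdeg (ds : List ℤ) : ℤ := (ds.map (fun n => n - 1)).sum

/-- An augmented, unital, associative differential graded algebra over a commutative
unital ring `R`, with cohomological grading (the differential has degree `+1`).
The grading is internal (`grading_internal`), multiplication and unit are graded,
the differential satisfies the graded Leibniz rule, and the augmentation is a
map of augmented dg algebras.  The operator `sgn` is the canonical "sign" operator
multiplying the component of degree `i` by `(-1)^i`; it is uniquely determined by the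
grading and is included as data for convenience (Koszul signs). -/
structure DGAlgebra (R : Type) [CommRing R] : Type 1 where
  carrier : Type
  [ring : Ring carrier]
  [alg : Algebra R carrier]
  grading : ℤ → Submodule R carrier
  grading_internal : DirectSum.IsInternal grading
  one_mem : (1 : carrier) ∈ grading 0
  mul_mem : ∀ {i j : ℤ} {a b : carrier},
    a ∈ grading i → b ∈ grading j → (a * b) ∈ grading (i + j)
  d : carrier →ₗ[R] carrier
  d_mem : ∀ {i : ℤ} {a : carrier}, a ∈ grading i → d a ∈ grading (i + 1)
  d_sq : ∀ a, d (d a) = 0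
  leibniz : ∀ {i : ℤ} {a b : carrier}, a ∈ grading i →
    d (a * b) = d a * b + pm i • (a * d b)
  aug : carrier →ₐ[R] R
  aug_d : ∀ a, aug (d a) = 0
  aug_graded : ∀ {i : ℤ} {a : carrier}, a ∈ grading i → i ≠ 0 → aug a = 0
  sgn : carrier →ₗ[R] carrier
  sgn_apply : ∀ {i : ℤ} {a : carrier}, a ∈ grading i → sgn a = pm i • a

attribute [instance] DGAlgebra.ring DGAlgebra.alg

namespace DGAlgebra

variable {R : Type} [CommRing R] (A : DGAlgebra R)

/-- The unnormalized bar construction `BA = T(s⁻¹A)` of `A`, *as a graded `R`-module*.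
At the level of (ungraded) `R`-modules it is the tensor algebra on the underlying
module of `A`; the word `[a₁|⋯|a_k]` is the product `ι a₁ ⋯ ι a_k`.  The
(de)suspension is invisible at the module level; it is accounted for by the degree
conventions (`bdeg`) and the sign operators. -/
abbrev Bar : Type := TensorAlgebra R A.carrier

/-- The bar word `[a₁|⋯|a_k] ∈ BA`. The empty word is the counit element `𝟙`. -/
def word (l : List A.carrier) : A.Bar := (l.map (TensorAlgebra.ι R)).prod

/-- `A.Homog l ds` says that the list `l` consists of homogeneous elements,
`l i` having degree `ds i`. -/
def Homog (l : List A.carrier) (ds : List ℤ) : Prop :=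
  l.length = ds.length ∧ ∀ i : ℕ, l.getD i 0 ∈ A.grading (ds.getD i 0)

/-- The concatenation operator `∇ : BA ⊗ BA → BA`. -/
def concat : A.Bar ⊗[R] A.Bar →ₗ[R] A.Bar := LinearMap.mul' R A.Bar

/-- The augmentation ideal `Ā ⊆ A`. -/
def augIdeal : Submodule R A.carrier := LinearMap.ker A.aug.toLinearMap

/-- The normalized bar construction `B̄A = T(s⁻¹Ā)`. -/
abbrev NBar : Type := TensorAlgebra R A.augIdeal

/-- words in the normalized bar construction. -/
def nword (l : List A.augIdeal) : A.NBar := (l.map (TensorAlgebra.ι R)).prod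

/-- The canonical inclusion `B̄A → BA`. -/
def nincl : A.NBar →ₗ[R] A.Bar :=
  (TensorAlgebra.lift R ((TensorAlgebra.ι R) ∘ₗ A.augIdeal.subtype)).toLinearMap

/-- The (internal, total-degree) grading of the bar construction:
`(BA)_n` is spanned by the homogeneous words of total desuspended degree `n`. -/
def barGrading (n : ℤ) : Submodule R A.Bar :=
  Submodule.span R {x | ∃ l ds, A.Homog l ds ∧ bdeg ds = n ∧ x = A.word l}

end DGAlgebra

/-- All the canonical structure carried by the bar construction `BA` of an augmented
dg algebra `A`: the deconcatenation coproduct `Δ`, the bar differential `dB`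
(tensor-product differential plus the `∂` multiplying adjacent entries through the
desuspended multiplication), the sign operator `sgnB`, the graded twist `tw`, the
canonical twisting cochain `α` (projection to `B₁A = s⁻¹A` followed by `σ`), and the
counit `εB`.  Each operator is uniquely determined by its prescribed values on the
words `[a₁|⋯|a_k]`, which span `BA`. -/
structure BarData {R : Type} [CommRing R] (A : DGAlgebra R) : Type where
  /-- deconcatenation coproduct -/
  Δ : A.Bar →ₗ[R] A.Bar ⊗[R] A.Bar
  Δ_word : ∀ l : List A.carrier,
    Δ (A.word l) = ∑ i ∈ Finset.range (l.length + 1),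
      A.word (l.take i) ⊗ₜ[R] A.word (l.drop i)
  /-- the bar differential -/
  dB : A.Bar →ₗ[R] A.Bar
  dB_word : ∀ (l : List A.carrier) (ds : List ℤ), A.Homog l ds →
    dB (A.word l) =
      - (∑ i ∈ Finset.range l.length,
          pm (bdeg (ds.take i)) • A.word (l.set i (A.d (l.getD i 0))))
      + ∑ i ∈ Finset.range (l.length - 1),
          pm (bdeg (ds.take (i + 1))) •
            A.word (l.take i ++ (l.getD i 0 * l.getD (i + 1) 0) :: l.drop (i + 2))
  /-- the sign operator of `BA` -/
  sgnB : A.Bar →ₗ[R] A.Bar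
  sgnB_word : ∀ (l : List A.carrier) (ds : List ℤ), A.Homog l ds →
    sgnB (A.word l) = pm (bdeg ds) • A.word l
  /-- the graded (Koszul) twist `BA ⊗ BA → BA ⊗ BA` -/
  tw : A.Bar ⊗[R] A.Bar →ₗ[R] A.Bar ⊗[R] A.Bar
  tw_word : ∀ (l m : List A.carrier) (ds es : List ℤ), A.Homog l ds → A.Homog m es →
    tw (A.word l ⊗ₜ[R] A.word m) = pm (bdeg ds * bdeg es) • (A.word m ⊗ₜ[R] A.word l)
  /-- the canonical twisting cochain `α : BA → A` -/
  α : A.Bar →ₗ[R] A.carrier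
  α_single : ∀ a : A.carrier, α (A.word [a]) = a
  α_word : ∀ l : List A.carrier, l.length ≠ 1 → α (A.word l) = 0
  /-- the counit of `BA` -/
  εB : A.Bar →ₗ[R] R
  εB_one : εB (1 : A.Bar) = 1
  εB_word : ∀ l : List A.carrier, l ≠ [] → εB (A.word l) = 0

namespace BarData

variable {R : Type} [CommRing R] {A : DGAlgebra R} (BD : BarData A)

/-- `sgnB` raised to the power `n` (only the parity of `n` matters);
used to express Koszul signs `(-1)^{n·|x|}`. -/
def sgnPow (n : ℤ) : A.Bar →ₗ[R] A.Bar :=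
  if n % 2 = 0 then LinearMap.id else BD.sgnB

/-- The differential of `BA ⊗ BA` (with the Koszul sign rule). -/
def dBB : A.Bar ⊗[R] A.Bar →ₗ[R] A.Bar ⊗[R] A.Bar :=
  TensorProduct.map BD.dB LinearMap.id + TensorProduct.map BD.sgnB BD.dB

/-- The middle interchange `1 ⊗ tw ⊗ 1` on `(BA ⊗ BA) ⊗ (BA ⊗ BA)`
(the graded twist of the two middle factors). -/
def midTw : (A.Bar ⊗[R] A.Bar) ⊗[R] (A.Bar ⊗[R] A.Bar) →ₗ[R]
    (A.Bar ⊗[R] A.Bar) ⊗[R] (A.Bar ⊗[R] A.Bar) :=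
  let e₁ := TensorProduct.assoc R A.Bar A.Bar (A.Bar ⊗[R] A.Bar)
  let e₂ := TensorProduct.congr (LinearEquiv.refl R A.Bar)
    (TensorProduct.assoc R A.Bar A.Bar A.Bar).symm
  e₁.symm.toLinearMap ∘ₗ e₂.symm.toLinearMap ∘ₗ
    (TensorProduct.map LinearMap.id (TensorProduct.map BD.tw LinearMap.id)) ∘ₗ
    e₂.toLinearMap ∘ₗ e₁.toLinearMap

/-- The coproduct of `BA ⊗ BA` (with Koszul signs). -/
def ΔBB : A.Bar ⊗[R] A.Bar →ₗ[R] (A.Bar ⊗[R] A.Bar) ⊗[R] (A.Bar ⊗[R] A.Bar) :=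
  BD.midTw ∘ₗ TensorProduct.map BD.Δ BD.Δ

/-- The counit of `BA ⊗ BA`. -/
def εBB : A.Bar ⊗[R] A.Bar →ₗ[R] R :=
  (TensorProduct.lid R R).toLinearMap ∘ₗ TensorProduct.map BD.εB BD.εB

/-- The twisting cochain `β = ε_{BA} ⊗ α : BA ⊗ BA → A`. -/
def β : A.Bar ⊗[R] A.Bar →ₗ[R] A.carrier :=
  (TensorProduct.lid R A.carrier).toLinearMap ∘ₗ TensorProduct.map BD.εB BD.α

end BarData

/-- `E : BA ⊗ BA → A` is a twisting cochain: it has degree `+1`, satisfies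
`E(𝟙,-) = E(-,𝟙) = α` and the twisting cochain equation `d(E) = E ∪ E`,
written as `d∘E + E∘d_{BA⊗BA} = μ_A (E ⊗ E) Δ_{BA⊗BA}` (all Koszul signs being
expressed via the sign operators). -/
structure IsTwistingCochain {R : Type} [CommRing R] {A : DGAlgebra R} (BD : BarData A)
    (E : A.Bar ⊗[R] A.Bar →ₗ[R] A.carrier) : Prop where
  degree : ∀ (l m : List A.carrier) (ds es : List ℤ), A.Homog l ds → A.Homog m es →
    E (A.word l ⊗ₜ[R] A.word m) ∈ A.grading (bdeg ds + bdeg es + 1)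
  unit_left : ∀ b : A.Bar, E ((1 : A.Bar) ⊗ₜ[R] b) = BD.α b
  unit_right : ∀ a : A.Bar, E (a ⊗ₜ[R] (1 : A.Bar)) = BD.α a
  twist : A.d ∘ₗ E + E ∘ₗ BD.dBB =
    LinearMap.mul' R A.carrier ∘ₗ
      TensorProduct.map (E ∘ₗ TensorProduct.map BD.sgnB BD.sgnB) E ∘ₗ BD.ΔBB

/-- A twisting cochain is *normalized* if `E([1],𝟙) = E(𝟙,[1]) = 1`, if `E(a,b) = 0`
whenever the total bar length is `> 1` and some entry equals `1 ∈ A`, and if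
`E(a,b)` lies in the augmentation ideal whenever the total bar length is `> 1`. -/
structure IsNormalized {R : Type} [CommRing R] {A : DGAlgebra R}
    (E : A.Bar ⊗[R] A.Bar →ₗ[R] A.carrier) : Prop where
  one_right : E (A.word [(1 : A.carrier)] ⊗ₜ[R] (1 : A.Bar)) = 1
  one_left : E ((1 : A.Bar) ⊗ₜ[R] A.word [(1 : A.carrier)]) = 1
  vanish : ∀ l m : List A.carrier, 1 < l.length + m.length →
    ((1 : A.carrier) ∈ l ∨ (1 : A.carrier) ∈ m) → E (A.word l ⊗ₜ[R] A.word m) = 0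
  aug_ideal : ∀ l m : List A.carrier, 1 < l.length + m.length →
    A.aug (E (A.word l ⊗ₜ[R] A.word m)) = 0

/-- A twisting cochain has *level 3* if `E(a,b) = 0` whenever `a` has bar length `> 1`. -/
def IsLevel3 {R : Type} [CommRing R] {A : DGAlgebra R}
    (E : A.Bar ⊗[R] A.Bar →ₗ[R] A.carrier) : Prop :=
  ∀ (l m : List A.carrier), 1 < l.length → E (A.word l ⊗ₜ[R] A.word m) = 0

/-- A multiplication on the unnormalized bar construction `BA`: a morphism of
dg coalgebras `BA ⊗ BA → BA` of degree `0` having the counit element `𝟙` as a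
two-sided unit (associativity is *not* required). -/
structure BarMult {R : Type} [CommRing R] {A : DGAlgebra R} (BD : BarData A) : Type where
  f : A.Bar ⊗[R] A.Bar →ₗ[R] A.Bar
  one_mul : ∀ b : A.Bar, f ((1 : A.Bar) ⊗ₜ[R] b) = b
  mul_one : ∀ a : A.Bar, f (a ⊗ₜ[R] (1 : A.Bar)) = a
  graded : ∀ (l m : List A.carrier) (ds es : List ℤ), A.Homog l ds → A.Homog m es →
    f (A.word l ⊗ₜ[R] A.word m) ∈ A.barGrading (bdeg ds + bdeg es)
  chain : BD.dB ∘ₗ f = f ∘ₗ BD.dBB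
  counit : BD.εB ∘ₗ f = BD.εBB
  coalg : BD.Δ ∘ₗ f = TensorProduct.map f f ∘ₗ BD.ΔBB


/-- The tensor product dg algebra `A = A' ⊗ A''` of two augmented dg algebras, with the
graded (Koszul) multiplication `(a'⊗a'')(b'⊗b'') = (-1)^{|a''||b'|} a'b' ⊗ a''b''`,
tensor-product differential, grading and augmentation.  It is presented as a dg algebra
`A` together with a linear isomorphism `e : A ≅ A' ⊗ A''` identifying all structure. -/
structure TensorDGA {R : Type} [CommRing R] (A' A'' : DGAlgebra R) : Type 1 where
  A : DGAlgebra R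
  e : A.carrier ≃ₗ[R] A'.carrier ⊗[R] A''.carrier
  mul_compat : ∀ {i'' j' : ℤ} (a' : A'.carrier) {a'' : A''.carrier} {b' : A'.carrier}
    (b'' : A''.carrier), a'' ∈ A''.grading i'' → b' ∈ A'.grading j' →
    e.symm (a' ⊗ₜ[R] a'') * e.symm (b' ⊗ₜ[R] b'') =
      pm (i'' * j') • e.symm ((a' * b') ⊗ₜ[R] (a'' * b''))
  one_def : e.symm ((1 : A'.carrier) ⊗ₜ[R] (1 : A''.carrier)) = 1
  grading_compat : ∀ {i' i'' : ℤ} {a' : A'.carrier} {a'' : A''.carrier},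
    a' ∈ A'.grading i' → a'' ∈ A''.grading i'' → e.symm (a' ⊗ₜ[R] a'') ∈ A.grading (i' + i'')
  d_compat : ∀ {i' : ℤ} (a'' : A''.carrier) {a' : A'.carrier}, a' ∈ A'.grading i' →
    A.d (e.symm (a' ⊗ₜ[R] a'')) =
      e.symm ((A'.d a') ⊗ₜ[R] a'') + pm i' • e.symm (a' ⊗ₜ[R] (A''.d a''))
  aug_compat : ∀ (a' : A'.carrier) (a'' : A''.carrier),
    A.aug (e.symm (a' ⊗ₜ[R] a'')) = A'.aug a' * A''.aug a''

namespace TensorDGA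

variable {R : Type} [CommRing R] {A' A'' : DGAlgebra R} (T : TensorDGA A' A'')

/-- The list `[a'₁⊗a''₁ | ⋯ | a'_k⊗a''_k]` of entries of `A = A' ⊗ A''`. -/
def mixList (l' : List A'.carrier) (l'' : List A''.carrier) : List T.A.carrier :=
  List.zipWith (fun x y => T.e.symm (x ⊗ₜ[R] y)) l' l''

end TensorDGA

/-- The Koszul sign exponent `Σ_{i>j} (|b'_i| - 1)·|b''_j|` appearing in the definition
of the map `Ẽ' ⊗ μ_{A''} : B(A'⊗A'') → A'⊗A''`. -/
def koszulExpL (ds' ds'' : List ℤ) (k : ℕ) : ℤ :=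
  ∑ p ∈ (Finset.range k ×ˢ Finset.range k).filter (fun p => p.2 < p.1),
    (ds'.getD p.1 0 - 1) * ds''.getD p.2 0

/-- The Koszul sign exponent `Σ_{i>j} |b'_i|·(|b''_j| - 1)` appearing in the definition
of the map `μ_{A'} ⊗ Ẽ'' : B(A'⊗A'') → A'⊗A''`. -/
def koszulExpR (ds' ds'' : List ℤ) (k : ℕ) : ℤ :=
  ∑ p ∈ (Finset.range k ×ˢ Finset.range k).filter (fun p => p.2 < p.1),
    ds'.getD p.1 0 * (ds''.getD p.2 0 - 1)

section Construction

variable {R : Type} [CommRing R] {A' A'' : DGAlgebra R} (T : TensorDGA A' A'')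
  (BD : BarData T.A)

/-- The operator `G_{[a₁]} = ((E'_{[a'₁]} ⊗ μ_{A''}) ⊗ 1 ⊗ (μ_{A'} ⊗ E''_{[a''₁]})) Δ⁽³⁾`,
where `F₁ = E'_{[a'₁]} ⊗ μ_{A''}` and `F₃ = μ_{A'} ⊗ E''_{[a''₁]}` (the Koszul sign of
the degree-`|a''₁|` map `F₃` passing the first two tensor factors being expressed by
`sgnPow n''`). -/
def Gone (F₁ F₃ : T.A.Bar →ₗ[R] T.A.carrier) (n'' : ℤ) :
    T.A.Bar →ₗ[R] T.A.carrier ⊗[R] (T.A.Bar ⊗[R] T.A.carrier) :=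
  TensorProduct.map (F₁ ∘ₗ BD.sgnPow n'') (TensorProduct.map (BD.sgnPow n'') F₃) ∘ₗ
    TensorProduct.map LinearMap.id BD.Δ ∘ₗ BD.Δ

/-- The operator
`M(Ẽ', Ẽ'', G̃) = (1⊗1⊗μ_A)((Ẽ'⊗μ_{A''})⊗1⊗(μ_{A'}⊗Ẽ'')⊗1)(1⊗Δ∇⁽³⁾⊗1)(1⊗1⊗(σ⁻¹⊗1⊗1)G̃)Δ⁽³⁾`
of the construction, where `F₁ = Ẽ' ⊗ μ_{A''}` (a map of degree `n'`),
`F₃ = μ_{A'} ⊗ Ẽ''` (degree `n''`), `g` is the degree of `G̃`, `σ⁻¹` is realized by the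
canonical inclusion `ι : s⁻¹A → BA`, and all Koszul signs are expressed via `sgnPow`. -/
def Mop (F₁ F₃ : T.A.Bar →ₗ[R] T.A.carrier) (n'' g : ℤ)
    (Gt : T.A.Bar →ₗ[R] T.A.carrier ⊗[R] (T.A.Bar ⊗[R] T.A.carrier)) :
    T.A.Bar →ₗ[R] T.A.carrier ⊗[R] (T.A.Bar ⊗[R] T.A.carrier) :=
  -- `(σ⁻¹ ⊗ 1 ⊗ 1) G̃ : BA → BA ⊗ (BA ⊗ A)`
  let Gt' : T.A.Bar →ₗ[R] T.A.Bar ⊗[R] (T.A.Bar ⊗[R] T.A.carrier) :=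
    TensorProduct.map (TensorAlgebra.ι R) LinearMap.id ∘ₗ Gt
  -- `x₂ ⊗ (y₁ ⊗ (y₂ ⊗ y₃)) ↦ Δ ∇⁽³⁾(x₂ ⊗ y₁ ⊗ y₂) ⊗ y₃`
  let inner : T.A.Bar ⊗[R] (T.A.Bar ⊗[R] (T.A.Bar ⊗[R] T.A.carrier)) →ₗ[R]
      T.A.Bar ⊗[R] (T.A.Bar ⊗[R] T.A.carrier) :=
    (TensorProduct.assoc R T.A.Bar T.A.Bar T.A.carrier).toLinearMap ∘ₗ
    TensorProduct.map BD.Δ LinearMap.id ∘ₗ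
    TensorProduct.map (T.A.concat ∘ₗ TensorProduct.map T.A.concat LinearMap.id)
      LinearMap.id ∘ₗ
    (TensorProduct.assoc R (T.A.Bar ⊗[R] T.A.Bar) T.A.Bar T.A.carrier).symm.toLinearMap ∘ₗ
    (TensorProduct.assoc R T.A.Bar T.A.Bar (T.A.Bar ⊗[R] T.A.carrier)).symm.toLinearMap
  TensorProduct.map (F₁ ∘ₗ BD.sgnPow n'')
      (TensorProduct.map (BD.sgnPow n'')
        (LinearMap.mul' R T.A.carrier ∘ₗ TensorProduct.map F₃ LinearMap.id)) ∘ₗ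
    TensorProduct.map LinearMap.id inner ∘ₗ
    TensorProduct.map (BD.sgnPow (g - 1)) (TensorProduct.map (BD.sgnPow (g - 1)) Gt') ∘ₗ
    TensorProduct.map LinearMap.id BD.Δ ∘ₗ BD.Δ

/-- The augmentation `ε_{B(A,A,A)} : A ⊗ BA ⊗ A → A ⊗_A A = A` of the two-sided bar
construction: it kills bar length `≥ 1` and multiplies the outer factors. -/
def εBAAA : T.A.carrier ⊗[R] (T.A.Bar ⊗[R] T.A.carrier) →ₗ[R] T.A.carrier :=
  LinearMap.mul' R T.A.carrier ∘ₗ TensorProduct.map LinearMap.id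
    ((TensorProduct.lid R T.A.carrier).toLinearMap ∘ₗ TensorProduct.map BD.εB LinearMap.id)

end Construction

/-- The data of the construction of Section 3: the maps `Ẽ' ⊗ μ_{A''}` and
`μ_{A'} ⊗ Ẽ''` (as operators `BA → A` characterized by their values on homogeneous
words of pure tensors, with the Koszul reordering signs), and the maps
`G_a : BA → B(A,A,A) = A ⊗ BA ⊗ A`, linear in `a`, determined by the recursion
`G_{[a₁]} = ((E'_{[a'₁]}⊗μ)⊗1⊗(μ⊗E''_{[a''₁]}))Δ⁽³⁾` and
`G_a = M(E'_{[a'₁]}, E''_{[a''₁]}, G_{[a₂|⋯|a_k]})` for bar length `k > 1`. -/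
structure GData {R : Type} [CommRing R] {A' A'' : DGAlgebra R}
    (BD' : BarData A') (BD'' : BarData A'') (T : TensorDGA A' A'') (BD : BarData T.A)
    (E' : A'.Bar ⊗[R] A'.Bar →ₗ[R] A'.carrier)
    (E'' : A''.Bar ⊗[R] A''.Bar →ₗ[R] A''.carrier) : Type where
  Emu : (A'.Bar →ₗ[R] A'.carrier) → (T.A.Bar →ₗ[R] T.A.carrier)
  Emu_word : ∀ (F : A'.Bar →ₗ[R] A'.carrier) (l' : List A'.carrier)
    (l'' : List A''.carrier) (ds' ds'' : List ℤ), l'.length = l''.length →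
    A'.Homog l' ds' → A''.Homog l'' ds'' →
    Emu F (T.A.word (T.mixList l' l'')) =
      pm (koszulExpL ds' ds'' l'.length) • T.e.symm (F (A'.word l') ⊗ₜ[R] l''.prod)
  muE : (A''.Bar →ₗ[R] A''.carrier) → (T.A.Bar →ₗ[R] T.A.carrier)
  muE_word : ∀ (F : A''.Bar →ₗ[R] A''.carrier) (l' : List A'.carrier)
    (l'' : List A''.carrier) (ds' ds'' : List ℤ), l'.length = l''.length →
    A'.Homog l' ds' → A''.Homog l'' ds'' →
    muE F (T.A.word (T.mixList l' l'')) =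
      pm (koszulExpR ds' ds'' l'.length) • T.e.symm (l'.prod ⊗ₜ[R] F (A''.word l''))
  G : T.A.Bar →ₗ[R] T.A.Bar →ₗ[R] T.A.carrier ⊗[R] (T.A.Bar ⊗[R] T.A.carrier)
  G_nil : G (T.A.word []) = 0
  G_single : ∀ {n' n'' : ℤ} (a' : A'.carrier) (a'' : A''.carrier),
    a' ∈ A'.grading n' → a'' ∈ A''.grading n'' →
    G (T.A.word [T.e.symm (a' ⊗ₜ[R] a'')]) =
      Gone T BD
        (Emu (E' ∘ₗ TensorProduct.mk R A'.Bar A'.Bar (A'.word [a'])))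
        (muE (E'' ∘ₗ TensorProduct.mk R A''.Bar A''.Bar (A''.word [a''])))
        n''
  G_cons : ∀ {n' n'' : ℤ} (a' : A'.carrier) (a'' : A''.carrier)
    (rest : List T.A.carrier) (ds : List ℤ),
    a' ∈ A'.grading n' → a'' ∈ A''.grading n'' → T.A.Homog rest ds → rest ≠ [] →
    G (T.A.word (T.e.symm (a' ⊗ₜ[R] a'') :: rest)) =
      Mop T BD
        (Emu (E' ∘ₗ TensorProduct.mk R A'.Bar A'.Bar (A'.word [a'])))
        (muE (E'' ∘ₗ TensorProduct.mk R A''.Bar A''.Bar (A''.word [a''])))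
        n'' (bdeg ds + 1)
        (G (T.A.word rest))

/-- The twisting cochain `E : BA ⊗ BA → A` of the construction:
`E(𝟙, b) = α(b)` and `E(a, b) = ε_{B(A,A,A)}(G_a(b))` for `a` of bar length `≥ 1`. -/
def Econstr {R : Type} [CommRing R] {A' A'' : DGAlgebra R}
    {BD' : BarData A'} {BD'' : BarData A''} {T : TensorDGA A' A''} {BD : BarData T.A}
    {E' : A'.Bar ⊗[R] A'.Bar →ₗ[R] A'.carrier}
    {E'' : A''.Bar ⊗[R] A''.Bar →ₗ[R] A''.carrier}
    (GD : GData BD' BD'' T BD E' E'') : T.A.Bar ⊗[R] T.A.Bar →ₗ[R] T.A.carrier :=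
  εBAAA T BD ∘ₗ TensorProduct.lift GD.G +
    (TensorProduct.lid R T.A.carrier).toLinearMap ∘ₗ TensorProduct.map BD.εB BD.α

/-!
All maps involved are linear in each bar entry, so the entries of `a` and `b` may be taken to be
homogeneous pure tensors `a'ᵢ ⊗ a''ᵢ`, unit entries being written `1 ⊗ 1`. Unfolding the recursion,
`G_a(b)` is then a combination of terms `x ⊗ [v] ⊗ d` whose first factor is `E'_{[a'₁]}` applied to
an initial piece `p` of the bar word, and whose last factor contains `E''_{[a''₁]}` applied to a
final piece `q`. `ε_{B(A,A,A)}` kills the terms with `[v] ≠ 𝟙`; for the others, when the total bar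
length exceeds `1`, `p` or `q` is nonempty and normalization of `E'` or `E''` puts that factor in
the augmentation ideal. An entry `1 ⊗ 1` either lands in an argument of `E'` or `E''`, which kills
the term, or stays in the middle bar word, which `ε` kills.
-/

namespace DGAlgebra

variable {R : Type} [CommRing R] {A : DGAlgebra R}

@[simp]
lemma word_nil : A.word [] = 1 := rfl

lemma word_cons (a : A.carrier) (l : List A.carrier) :
    A.word (a :: l) = TensorAlgebra.ι R a * A.word l := by
  simp [word]

lemma word_append (l m : List A.carrier) : A.word (l ++ m) = A.word l * A.word m := by
  simp [word]

lemma homog_iff {l : List A.carrier} {ds : List ℤ} :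
    A.Homog l ds ↔ List.Forall₂ (fun a n => a ∈ A.grading n) l ds := by
  induction l generalizing ds with
  | nil => cases ds <;> simp [Homog, (A.grading 0).zero_mem]
  | cons a l ih =>
    cases ds with
    | nil => simp [Homog]
    | cons n ds =>
      rw [List.forall₂_cons, ← ih]
      constructor
      · rintro ⟨hlen, h⟩
        exact ⟨by simpa using h 0, by simpa using hlen, fun i => by simpa using h (i + 1)⟩
      · rintro ⟨ha, hlen, h⟩
        refine ⟨by simpa using hlen, fun i => ?_⟩
        cases i with
        | zero => simpa using ha
        | succ i => simpa using h i

namespace Homog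

variable {l m : List A.carrier} {ds es : List ℤ}

lemma nil : A.Homog [] [] := homog_iff.2 .nil

lemma cons {a : A.carrier} {n : ℤ} (ha : a ∈ A.grading n) (h : A.Homog l ds) :
    A.Homog (a :: l) (n :: ds) :=
  homog_iff.2 (.cons ha (homog_iff.1 h))

lemma append (hl : A.Homog l ds) (hm : A.Homog m es) : A.Homog (l ++ m) (ds ++ es) :=
  homog_iff.2 (List.rel_append (homog_iff.1 hl) (homog_iff.1 hm))

lemma take (i : ℕ) (h : A.Homog l ds) : A.Homog (l.take i) (ds.take i) :=
  homog_iff.2 (List.forall₂_take i (homog_iff.1 h))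

lemma drop (i : ℕ) (h : A.Homog l ds) : A.Homog (l.drop i) (ds.drop i) :=
  homog_iff.2 (List.forall₂_drop i (homog_iff.1 h))

lemma prod_mem (h : A.Homog l ds) : l.prod ∈ A.grading ds.sum := by
  induction homog_iff.1 h with
  | nil => simpa using A.one_mem
  | cons ha _ ih => simpa using A.mul_mem ha (ih (homog_iff.2 ‹_›))

lemma of_cons {a : A.carrier} (h : A.Homog (a :: l) ds) :
    ∃ n ds', ds = n :: ds' ∧ a ∈ A.grading n ∧ A.Homog l ds' := by
  obtain ⟨n, ds', ha, hl, rfl⟩ := List.forall₂_cons_left_iff.1 (homog_iff.1 h)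
  exact ⟨n, ds', rfl, ha, homog_iff.2 hl⟩

end Homog

end DGAlgebra

lemma List.mem_zip_take_or_mem_zip_drop {α β : Type*} {x : α × β} {l : List α} {m : List β}
    (i : ℕ) (h : x ∈ l.zip m) :
    x ∈ (l.take i).zip (m.take i) ∨ x ∈ (l.drop i).zip (m.drop i) := by
  rw [← List.take_append_drop i (l.zip m)] at h
  simpa only [List.zip_eq_zipWith, List.take_zipWith, List.drop_zipWith, List.mem_append] using h

namespace TensorDGA

variable {R : Type} [CommRing R] {A' A'' : DGAlgebra R} {T : TensorDGA A' A''}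
  {l' : List A'.carrier} {l'' : List A''.carrier}

lemma mixList_cons (a' : A'.carrier) (a'' : A''.carrier) (l' : List A'.carrier)
    (l'' : List A''.carrier) :
    T.mixList (a' :: l') (a'' :: l'') = T.e.symm (a' ⊗ₜ[R] a'') :: T.mixList l' l'' := rfl

lemma length_mixList (h : l'.length = l''.length) : (T.mixList l' l'').length = l'.length := by
  simp [mixList, h]

lemma mixList_eq_nil_iff (h : l'.length = l''.length) : T.mixList l' l'' = [] ↔ l' = [] := by
  rw [← List.length_eq_zero_iff, ← List.length_eq_zero_iff, length_mixList h]

lemma take_mixList (i : ℕ) : (T.mixList l' l'').take i = T.mixList (l'.take i) (l''.take i) :=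
  List.take_zipWith

lemma drop_mixList (i : ℕ) : (T.mixList l' l'').drop i = T.mixList (l'.drop i) (l''.drop i) :=
  List.drop_zipWith

lemma mixList_append (m' : List A'.carrier) (m'' : List A''.carrier)
    (h : l'.length = l''.length) :
    T.mixList (l' ++ m') (l'' ++ m'') = T.mixList l' l'' ++ T.mixList m' m'' :=
  List.zipWith_append h

lemma homog_mixList {ds' ds'' : List ℤ} (h' : A'.Homog l' ds') (h'' : A''.Homog l'' ds'') :
    T.A.Homog (T.mixList l' l'') (List.zipWith (· + ·) ds' ds'') := by
  rw [DGAlgebra.homog_iff] at *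
  induction h' generalizing l'' ds'' with
  | nil => exact .nil
  | cons ha _ ih =>
    cases h'' with
    | nil => exact .nil
    | cons hb h'' => exact .cons (T.grading_compat ha hb) (ih h'')

variable (T) in
def homogeneousPureTensors : Set T.A.carrier :=
  {x | ∃ (i' i'' : ℤ) (a' : A'.carrier) (a'' : A''.carrier),
    a' ∈ A'.grading i' ∧ a'' ∈ A''.grading i'' ∧ x = T.e.symm (a' ⊗ₜ[R] a'')}

lemma one_mem_homogeneousPureTensors : (1 : T.A.carrier) ∈ T.homogeneousPureTensors :=
  ⟨0, 0, 1, 1, A'.one_mem, A''.one_mem, T.one_def.symm⟩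

lemma span_homogeneousPureTensors : Submodule.span R T.homogeneousPureTensors = ⊤ := by
  have span_homogeneous (A : DGAlgebra R) :
      Submodule.span R (⋃ i, (A.grading i : Set A.carrier)) = ⊤ := by
    rw [← Submodule.iSup_eq_span, A.grading_internal.submodule_iSup_eq_top]
  have hsub : T.e.symm.toLinearMap '' Set.image2 (fun a' a'' => TensorProduct.mk R _ _ a' a'')
      (⋃ i, (A'.grading i : Set A'.carrier)) (⋃ i, (A''.grading i : Set A''.carrier)) ⊆
      T.homogeneousPureTensors := by
    rintro _ ⟨_, ⟨a', ha', a'', ha'', rfl⟩, rfl⟩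
    obtain ⟨i', ha'⟩ := Set.mem_iUnion.1 ha'
    obtain ⟨i'', ha''⟩ := Set.mem_iUnion.1 ha''
    exact ⟨i', i'', a', a'', ha', ha'', rfl⟩
  refine eq_top_iff.2 (le_trans ?_ (Submodule.span_mono hsub))
  rw [Submodule.span_image, ← Submodule.map₂_span_span, span_homogeneous, span_homogeneous,
    TensorProduct.map₂_mk_top_top_eq_top, Submodule.map_top, LinearEquiv.range]

-- Unit entries are kept so that they can be written `1 ⊗ 1`: a pure tensor `x' ⊗ x'' = 1`
-- need not have `x' = 1`.
variable (T) in
def Refines (l l₂ : List T.A.carrier) : Prop :=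
  List.Forall₂ (fun a b => b ∈ T.homogeneousPureTensors ∧ (a = 1 → b = 1)) l l₂

lemma word_mem_of_refines {M : Type} [AddCommGroup M] [Module R M] (N : Submodule R M)
    (l : List T.A.carrier) (f : T.A.Bar →ₗ[R] M)
    (h : ∀ l₂, T.Refines l l₂ → f (T.A.word l₂) ∈ N) : f (T.A.word l) ∈ N := by
  induction l generalizing f with
  | nil => exact h [] .nil
  | cons a l ih =>
    have key : ∀ b ∈ T.homogeneousPureTensors, (a = 1 → b = 1) →
        f (TensorAlgebra.ι R b * T.A.word l) ∈ N := fun b hb hab =>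
      ih (f ∘ₗ LinearMap.mulLeft R (TensorAlgebra.ι R b)) fun l₂ hl₂ => by
        simpa [DGAlgebra.word_cons] using h (b :: l₂) (.cons ⟨hb, hab⟩ hl₂)
    rw [DGAlgebra.word_cons]
    by_cases ha : a = 1
    · exact key a (ha ▸ one_mem_homogeneousPureTensors) fun _ => ha
    · have hspan : ∀ x ∈ Submodule.span R T.homogeneousPureTensors,
          f (TensorAlgebra.ι R x * T.A.word l) ∈ N := fun x hx => by
        induction hx using Submodule.span_induction with
        | mem b hb => exact key b hb fun h => absurd h ha
        | zero => simp
        | add x y _ _ hx hy => simpa [add_mul] using N.add_mem hx hy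
        | smul c x _ hx => simpa using N.smul_mem c hx
      exact hspan a (by simp [span_homogeneousPureTensors])

lemma exists_mixList_of_refines {l l₂ : List T.A.carrier} (h : T.Refines l l₂) :
    ∃ (l' : List A'.carrier) (l'' : List A''.carrier) (ds' ds'' : List ℤ),
      A'.Homog l' ds' ∧ A''.Homog l'' ds'' ∧ l'.length = l''.length ∧ l'.length = l.length ∧
      l₂ = T.mixList l' l'' ∧ ((1 : T.A.carrier) ∈ l → (1, 1) ∈ l'.zip l'') := by
  induction h with
  | nil => exact ⟨[], [], [], [], .nil, .nil, rfl, rfl, rfl, by simp⟩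
  | @cons a b l l₂ hab _ ih =>
    obtain ⟨l', l'', ds', ds'', h', h'', hlen, hlen', rfl, hone⟩ := ih
    by_cases ha : a = 1
    · refine ⟨1 :: l', 1 :: l'', 0 :: ds', 0 :: ds'', .cons A'.one_mem h', .cons A''.one_mem h'',
        by simp [hlen], by simp [hlen'], ?_, fun _ => by simp⟩
      rw [hab.2 ha, mixList_cons, T.one_def]
    · obtain ⟨i', i'', a', a'', ha', ha'', rfl⟩ := hab.1
      refine ⟨a' :: l', a'' :: l'', i' :: ds', i'' :: ds'', .cons ha' h', .cons ha'' h'',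
        by simp [hlen], by simp [hlen'], rfl, fun h1 => ?_⟩
      rcases List.mem_cons.1 h1 with h1 | h1
      · exact absurd h1.symm ha
      · exact List.mem_cons_of_mem _ (hone h1)

lemma tmul_word_mem_of_refines {M : Type} [AddCommGroup M] [Module R M] (N : Submodule R M)
    (Φ : T.A.Bar ⊗[R] T.A.Bar →ₗ[R] M) (l m : List T.A.carrier)
    (h : ∀ l₂ m₂, T.Refines l l₂ → T.Refines m m₂ →
      Φ (T.A.word l₂ ⊗ₜ[R] T.A.word m₂) ∈ N) :
    Φ (T.A.word l ⊗ₜ[R] T.A.word m) ∈ N :=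
  word_mem_of_refines N l (Φ ∘ₗ (TensorProduct.mk R _ _).flip (T.A.word m)) fun l₂ hl =>
    word_mem_of_refines N m (Φ ∘ₗ TensorProduct.mk R _ _ (T.A.word l₂)) fun m₂ hm =>
      h l₂ m₂ hl hm

end TensorDGA

namespace BarData

variable {R : Type} [CommRing R] {A : DGAlgebra R} (BD : BarData A)

lemma sgnPow_word (n : ℤ) {l : List A.carrier} {ds : List ℤ} (h : A.Homog l ds) :
    ∃ c : R, BD.sgnPow n (A.word l) = c • A.word l := by
  unfold sgnPow
  split
  · exact ⟨1, by simp⟩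
  · exact ⟨(pm (bdeg ds) : R), by rw [BD.sgnB_word l ds h, Int.cast_smul_eq_zsmul]⟩

lemma sgnPow_one (n : ℤ) : BD.sgnPow n 1 = 1 := by
  unfold sgnPow
  split
  · rfl
  · rw [show (1 : A.Bar) = A.word [] from rfl, BD.sgnB_word [] [] .nil]
    simp [bdeg, pm]

lemma Δ_one : BD.Δ 1 = 1 ⊗ₜ[R] 1 := by
  simpa [DGAlgebra.word] using BD.Δ_word []

lemma map_id_Δ_comp_Δ_word (l : List A.carrier) :
    TensorProduct.map LinearMap.id BD.Δ (BD.Δ (A.word l)) =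
      ∑ i ∈ Finset.range (l.length + 1), ∑ j ∈ Finset.range ((l.drop i).length + 1),
        A.word (l.take i) ⊗ₜ[R]
          (A.word ((l.drop i).take j) ⊗ₜ[R] A.word ((l.drop i).drop j)) := by
  rw [BD.Δ_word, map_sum]
  refine Finset.sum_congr rfl fun i _ => ?_
  rw [TensorProduct.map_tmul, BD.Δ_word, TensorProduct.tmul_sum]
  rfl

end BarData

section Normalization

variable {R : Type} [CommRing R] {A' A'' : DGAlgebra R} (T : TensorDGA A' A'')

/-- `(E'_{[a']} ⊗ μ_{A''})[p'₁⊗p''₁|⋯|p'ₖ⊗p''ₖ]` without its Koszul sign. -/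
def emuValue (E' : A'.Bar ⊗[R] A'.Bar →ₗ[R] A'.carrier) (a' : A'.carrier)
    (p' : List A'.carrier) (p'' : List A''.carrier) : T.A.carrier :=
  T.e.symm (E' (A'.word [a'] ⊗ₜ[R] A'.word p') ⊗ₜ[R] p''.prod)

/-- `(μ_{A'} ⊗ E''_{[a'']})[q'₁⊗q''₁|⋯|q'ₖ⊗q''ₖ]` without its Koszul sign. -/
def mueValue (E'' : A''.Bar ⊗[R] A''.Bar →ₗ[R] A''.carrier) (a'' : A''.carrier)
    (q' : List A'.carrier) (q'' : List A''.carrier) : T.A.carrier :=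
  T.e.symm (q'.prod ⊗ₜ[R] E'' (A''.word [a''] ⊗ₜ[R] A''.word q''))

/-- The terms `(x' ⊗ x'') ⊗ [v] ⊗ d` of `B(A,A,A)` out of which `G_a(b)` is built; `big` stands for
"the total bar length of `a, b` is `> 1`" and `one` for "some entry of `a` or `b` is `1 ⊗ 1`".
The first and last conditions are what `ε_{B(A,A,A)}` needs; the middle one records where the unit
entry went, which is what the recursion `G_a = M(E'_{[a'₁]}, E''_{[a''₁]}, G_{[a₂|⋯|aₖ]})`
propagates. -/
def admissibleTerms (big one : Prop) : Set (T.A.carrier ⊗[R] (T.A.Bar ⊗[R] T.A.carrier)) :=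
  {t | ∃ (x' : A'.carrier) (x'' : A''.carrier) (i' i'' : ℤ) (v' : List A'.carrier)
    (v'' : List A''.carrier) (fs' fs'' : List ℤ) (d : T.A.carrier),
    x' ∈ A'.grading i' ∧ x'' ∈ A''.grading i'' ∧ A'.Homog v' fs' ∧ A''.Homog v'' fs'' ∧
    v'.length = v''.length ∧
    t = T.e.symm (x' ⊗ₜ[R] x'') ⊗ₜ[R] (T.A.word (T.mixList v' v'') ⊗ₜ[R] d) ∧
    (big → v' = [] → T.A.aug (T.e.symm (x' ⊗ₜ[R] x'') * d) = 0) ∧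
    (one → x'' = 1 ∨ (1 : A''.carrier) ∈ v'') ∧
    (one → big → v' = [] → T.e.symm (x' ⊗ₜ[R] x'') * d = 0)}

variable {T} {BD : BarData T.A}

lemma εBAAA_tmul (x : T.A.carrier) (w : T.A.Bar) (d : T.A.carrier) :
    εBAAA T BD (x ⊗ₜ[R] (w ⊗ₜ[R] d)) = BD.εB w • (x * d) := by
  simp [εBAAA]

lemma εBAAA_tmul_mixList (x d : T.A.carrier) {v' : List A'.carrier} {v'' : List A''.carrier}
    (hv : v'.length = v''.length) :
    εBAAA T BD (x ⊗ₜ[R] (T.A.word (T.mixList v' v'') ⊗ₜ[R] d)) =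
      if v' = [] then x * d else 0 := by
  split_ifs with h
  · subst h
    rw [εBAAA_tmul, show T.mixList [] v'' = [] from rfl, DGAlgebra.word_nil, BD.εB_one, one_smul]
  · rw [εBAAA_tmul, BD.εB_word _ (by rwa [Ne, TensorDGA.mixList_eq_nil_iff hv]), zero_smul]

lemma aug_εBAAA_of_mem_span {big one : Prop} (hbig : big)
    {t : T.A.carrier ⊗[R] (T.A.Bar ⊗[R] T.A.carrier)}
    (ht : t ∈ Submodule.span R (admissibleTerms T big one)) : T.A.aug (εBAAA T BD t) = 0 := by
  suffices admissibleTerms T big one ⊆ LinearMap.ker (T.A.aug.toLinearMap ∘ₗ εBAAA T BD) from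
    Submodule.span_le.2 this ht
  rintro _ ⟨x', x'', -, -, v', v'', -, -, d, -, -, -, -, hv, rfl, haug, -, -⟩
  simp only [SetLike.mem_coe, LinearMap.mem_ker, LinearMap.comp_apply, AlgHom.toLinearMap_apply,
    εBAAA_tmul_mixList _ _ hv]
  split_ifs with h
  · exact haug hbig h
  · exact map_zero _

lemma εBAAA_eq_zero_of_mem_span {big one : Prop} (hbig : big) (hone : one)
    {t : T.A.carrier ⊗[R] (T.A.Bar ⊗[R] T.A.carrier)}
    (ht : t ∈ Submodule.span R (admissibleTerms T big one)) : εBAAA T BD t = 0 := by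
  suffices admissibleTerms T big one ⊆ LinearMap.ker (εBAAA T BD) from
    Submodule.span_le.2 this ht
  rintro _ ⟨x', x'', -, -, v', v'', -, -, d, -, -, -, -, hv, rfl, -, -, hzero⟩
  simp only [SetLike.mem_coe, LinearMap.mem_ker, εBAAA_tmul_mixList _ _ hv]
  split_ifs with h
  · exact hzero hone hbig h
  · rfl

variable {BD' : BarData A'} {BD'' : BarData A''} {E' : A'.Bar ⊗[R] A'.Bar →ₗ[R] A'.carrier}
  {E'' : A''.Bar ⊗[R] A''.Bar →ₗ[R] A''.carrier} (GD : GData BD' BD'' T BD E' E'')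

lemma emuValue_eq_zero (hN' : IsNormalized E') {a' : A'.carrier} {p' : List A'.carrier}
    (p'' : List A''.carrier) (hp : p' ≠ []) (h1 : a' = 1 ∨ 1 ∈ p') :
    emuValue T E' a' p' p'' = 0 := by
  rw [emuValue, hN'.vanish [a'] p' (by simpa using List.length_pos_iff.2 hp)
    (by simpa [eq_comm] using h1), TensorProduct.zero_tmul, map_zero]

lemma mueValue_eq_zero (hN'' : IsNormalized E'') {a'' : A''.carrier} (q' : List A'.carrier)
    {q'' : List A''.carrier} (hq : q'' ≠ []) (h1 : a'' = 1 ∨ 1 ∈ q'') :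
    mueValue T E'' a'' q' q'' = 0 := by
  rw [mueValue, hN''.vanish [a''] q'' (by simpa using List.length_pos_iff.2 hq)
    (by simpa [eq_comm] using h1), TensorProduct.tmul_zero, map_zero]

lemma aug_emuValue (hN' : IsNormalized E') (a' : A'.carrier) {p' : List A'.carrier}
    (p'' : List A''.carrier) (hp : p' ≠ []) : T.A.aug (emuValue T E' a' p' p'') = 0 := by
  rw [emuValue, T.aug_compat, hN'.aug_ideal [a'] p' (by simpa using List.length_pos_iff.2 hp),
    zero_mul]

lemma aug_mueValue (hN'' : IsNormalized E'') (a'' : A''.carrier) (q' : List A'.carrier)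
    {q'' : List A''.carrier} (hq : q'' ≠ []) : T.A.aug (mueValue T E'' a'' q' q'') = 0 := by
  rw [mueValue, T.aug_compat, hN''.aug_ideal [a''] q'' (by simpa using List.length_pos_iff.2 hq),
    mul_zero]

/-- The terms of `G_a(b)`: `p` is the part of `b` fed to `E'_{[a']}`, and the rest `w` of the bar
word is split at `k` between the middle factor and `E''_{[a'']}`. -/
lemma emuValue_tmul_mem_span_admissibleTerms (hE' : IsTwistingCochain BD' E')
    (hN' : IsNormalized E') (hN'' : IsNormalized E'') {n' : ℤ} {a' : A'.carrier}
    (a'' : A''.carrier) (ha' : a' ∈ A'.grading n')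
    {p' : List A'.carrier} {p'' : List A''.carrier} {ps' ps'' : List ℤ}
    (hp' : A'.Homog p' ps') (hp'' : A''.Homog p'' ps'') (hp : p'.length = p''.length)
    {w' : List A'.carrier} {w'' : List A''.carrier} {ws' ws'' : List ℤ}
    (hw' : A'.Homog w' ws') (hw'' : A''.Homog w'' ws'') (hw : w'.length = w''.length)
    (k : ℕ) (d : T.A.carrier) {big one : Prop}
    (hbig : big → p' = [] → w' ≠ [])
    (hone : one → 1 ∈ p' ∨ (a' = 1 ∧ a'' = 1) ∨ 1 ∈ w'') :
    emuValue T E' a' p' p'' ⊗ₜ[R] (T.A.word (T.mixList (w'.take k) (w''.take k)) ⊗ₜ[R]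
        (mueValue T E'' a'' (w'.drop k) (w''.drop k) * d)) ∈
      Submodule.span R (admissibleTerms T big one) := by
  set X := emuValue T E' a' p' p''
  set Y := mueValue T E'' a'' (w'.drop k) (w''.drop k)
  have hwk : (w'.take k).length = (w''.take k).length := by simp [hw]
  have hw_ne_nil : w' ≠ [] → w'' ≠ [] := by
    rw [← List.length_pos_iff, ← List.length_pos_iff, hw]; exact id
  -- an empty middle word forces `k = 0`, so that `Y` involves all of `w`
  have hk : big → w'.take k = [] → p' = [] → k = 0 ∧ w'' ≠ [] := fun hb hv hp0 =>
    ⟨(List.take_eq_nil_iff.1 hv).resolve_right (hbig hb hp0), hw_ne_nil (hbig hb hp0)⟩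
  have mem : (one → p'' = [] ∨ 1 ∈ w''.take k) →
      (one → big → w'.take k = [] → X * (Y * d) = 0) →
      X ⊗ₜ[R] (T.A.word (T.mixList (w'.take k) (w''.take k)) ⊗ₜ[R] (Y * d)) ∈
        Submodule.span R (admissibleTerms T big one) := by
    refine fun h1 h2 => Submodule.subset_span ⟨_, p''.prod, _, _, w'.take k, w''.take k, _, _,
      Y * d, hE'.degree [a'] p' [n'] ps' (.cons ha' .nil) hp', hp''.prod_mem, hw'.take k,
      hw''.take k, hwk, rfl, fun hb hv => ?_, fun ho => (h1 ho).imp_left (by simp_all), h2⟩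
    rw [map_mul]
    by_cases hp0 : p' = []
    · obtain ⟨rfl, hne⟩ := hk hb hv hp0
      refine mul_eq_zero_of_right _ ?_
      simp only [Y, map_mul, List.drop_zero, aug_mueValue hN'' a'' _ hne, zero_mul]
    · exact mul_eq_zero_of_left (aug_emuValue hN' a' p'' hp0) _
  by_cases ho : one
  swap
  · exact mem (absurd · ho) (absurd · ho)
  rcases hone ho with h1 | ⟨rfl, rfl⟩ | h1
  · have hX : X = 0 := emuValue_eq_zero hN' p'' (List.ne_nil_of_mem h1) (.inr h1)
    simp [hX]
  · by_cases hp0 : p' = []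
    · refine mem (fun _ => .inl (List.eq_nil_of_length_eq_zero (by simp [← hp, hp0])))
        fun _ hb hv => ?_
      obtain ⟨rfl, hne⟩ := hk hb hv hp0
      simp only [Y, List.drop_zero, mueValue_eq_zero hN'' _ hne (.inl rfl), zero_mul, mul_zero]
    · have hX : X = 0 := emuValue_eq_zero hN' p'' hp0 (.inl rfl)
      simp [hX]
  · rw [← List.take_append_drop k w'', List.mem_append] at h1
    rcases h1 with h1 | h1
    · refine mem (fun _ => .inr h1) fun _ _ hv => absurd ?_ (List.ne_nil_of_mem h1)
      rw [← List.length_eq_zero_iff, ← hwk, hv, List.length_nil]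
    · have hY : Y = 0 := mueValue_eq_zero hN'' _ (List.ne_nil_of_mem h1) (.inr h1)
      simp [hY]

lemma GData.Emu_mixList (a' : A'.carrier) {p' : List A'.carrier} {p'' : List A''.carrier}
    {ps' ps'' : List ℤ} (hp' : A'.Homog p' ps') (hp'' : A''.Homog p'' ps'')
    (hp : p'.length = p''.length) :
    ∃ c : R, GD.Emu (E' ∘ₗ TensorProduct.mk R A'.Bar A'.Bar (A'.word [a']))
      (T.A.word (T.mixList p' p'')) = c • emuValue T E' a' p' p'' :=
  ⟨(pm (koszulExpL ps' ps'' p'.length) : R), by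
    rw [GD.Emu_word _ p' p'' ps' ps'' hp hp' hp'', Int.cast_smul_eq_zsmul]; rfl⟩

lemma GData.muE_mixList (a'' : A''.carrier) {q' : List A'.carrier} {q'' : List A''.carrier}
    {qs' qs'' : List ℤ} (hq' : A'.Homog q' qs') (hq'' : A''.Homog q'' qs'')
    (hq : q'.length = q''.length) :
    ∃ c : R, GD.muE (E'' ∘ₗ TensorProduct.mk R A''.Bar A''.Bar (A''.word [a'']))
      (T.A.word (T.mixList q' q'')) = c • mueValue T E'' a'' q' q'' :=
  ⟨(pm (koszulExpR qs' qs'' q'.length) : R), by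
    rw [GD.muE_word _ q' q'' qs' qs'' hq hq' hq'', Int.cast_smul_eq_zsmul]; rfl⟩

lemma GData.Emu_one (a' : A'.carrier) :
    GD.Emu (E' ∘ₗ TensorProduct.mk R A'.Bar A'.Bar (A'.word [a'])) 1 =
      T.e.symm (E' (A'.word [a'] ⊗ₜ[R] 1) ⊗ₜ[R] 1) := by
  have h := GD.Emu_word (E' ∘ₗ TensorProduct.mk R A'.Bar A'.Bar (A'.word [a'])) [] [] [] [] rfl
    .nil .nil
  rw [LinearMap.comp_apply, TensorProduct.mk_apply] at h
  simpa [koszulExpL, pm, TensorDGA.mixList] using h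

lemma GData.muE_one (a'' : A''.carrier) :
    GD.muE (E'' ∘ₗ TensorProduct.mk R A''.Bar A''.Bar (A''.word [a''])) 1 =
      T.e.symm (1 ⊗ₜ[R] E'' (A''.word [a''] ⊗ₜ[R] 1)) := by
  have h := GD.muE_word (E'' ∘ₗ TensorProduct.mk R A''.Bar A''.Bar (A''.word [a''])) [] [] [] []
    rfl .nil .nil
  rw [LinearMap.comp_apply, TensorProduct.mk_apply] at h
  simpa [koszulExpR, pm, TensorDGA.mixList] using h

lemma GData.G_single_mixList_mem {n' n'' : ℤ} {a' : A'.carrier} {a'' : A''.carrier}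
    (ha' : a' ∈ A'.grading n') (ha'' : a'' ∈ A''.grading n'')
    {m' : List A'.carrier} {m'' : List A''.carrier} {es' es'' : List ℤ}
    (hm' : A'.Homog m' es') (hm'' : A''.Homog m'' es'') (hm : m'.length = m''.length)
    {N : Submodule R (T.A.carrier ⊗[R] (T.A.Bar ⊗[R] T.A.carrier))}
    (h : ∀ i j, emuValue T E' a' (m'.take i) (m''.take i) ⊗ₜ[R]
      (T.A.word (T.mixList ((m'.drop i).take j) ((m''.drop i).take j)) ⊗ₜ[R]
        mueValue T E'' a'' ((m'.drop i).drop j) ((m''.drop i).drop j)) ∈ N) :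
    GD.G (T.A.word [T.e.symm (a' ⊗ₜ[R] a'')]) (T.A.word (T.mixList m' m'')) ∈ N := by
  rw [GD.G_single a' a'' ha' ha'', Gone, LinearMap.comp_apply, LinearMap.comp_apply,
    BD.map_id_Δ_comp_Δ_word, map_sum]
  refine Submodule.sum_mem _ fun i _ => ?_
  rw [map_sum]
  refine Submodule.sum_mem _ fun j _ => ?_
  simp only [TensorProduct.map_tmul, LinearMap.comp_apply, TensorDGA.take_mixList,
    TensorDGA.drop_mixList]
  obtain ⟨c₁, hc₁⟩ := BD.sgnPow_word n''
    (TensorDGA.homog_mixList (hm'.take i) (hm''.take i))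
  obtain ⟨c₂, hc₂⟩ := GD.Emu_mixList a' (hm'.take i) (hm''.take i) (by simp [hm])
  obtain ⟨c₃, hc₃⟩ := BD.sgnPow_word n''
    (TensorDGA.homog_mixList ((hm'.drop i).take j) ((hm''.drop i).take j))
  obtain ⟨c₄, hc₄⟩ := GD.muE_mixList a'' ((hm'.drop i).drop j) ((hm''.drop i).drop j)
    (by simp [hm])
  rw [hc₁, map_smul, hc₂, smul_smul, hc₃, hc₄, TensorProduct.smul_tmul_smul,
    TensorProduct.smul_tmul_smul]
  exact N.smul_mem _ (h i j)

lemma GData.Emu_tmul_Δ_mixList_mem (a' : A'.carrier) (a'' : A''.carrier) (n'' : ℤ)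
    {p' : List A'.carrier} {p'' : List A''.carrier} {ps' ps'' : List ℤ}
    (hp' : A'.Homog p' ps') (hp'' : A''.Homog p'' ps'') (hp : p'.length = p''.length)
    {w' : List A'.carrier} {w'' : List A''.carrier} {ws' ws'' : List ℤ}
    (hw' : A'.Homog w' ws') (hw'' : A''.Homog w'' ws'') (hw : w'.length = w''.length)
    (d : T.A.carrier) {N : Submodule R (T.A.carrier ⊗[R] (T.A.Bar ⊗[R] T.A.carrier))}
    (h : ∀ k, emuValue T E' a' p' p'' ⊗ₜ[R]
      (T.A.word (T.mixList (w'.take k) (w''.take k)) ⊗ₜ[R]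
        (mueValue T E'' a'' (w'.drop k) (w''.drop k) * d)) ∈ N) :
    GD.Emu (E' ∘ₗ TensorProduct.mk R A'.Bar A'.Bar (A'.word [a']))
        (BD.sgnPow n'' (T.A.word (T.mixList p' p''))) ⊗ₜ[R]
      TensorProduct.map (BD.sgnPow n'') (LinearMap.mul' R T.A.carrier ∘ₗ
        TensorProduct.map (GD.muE (E'' ∘ₗ TensorProduct.mk R A''.Bar A''.Bar (A''.word [a''])))
          LinearMap.id)
        (TensorProduct.assoc R T.A.Bar T.A.Bar T.A.carrier
          (BD.Δ (T.A.word (T.mixList w' w'')) ⊗ₜ[R] d)) ∈ N := by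
  rw [BD.Δ_word, TensorProduct.sum_tmul, map_sum, map_sum, TensorProduct.tmul_sum]
  refine Submodule.sum_mem _ fun k _ => ?_
  obtain ⟨c₁, hc₁⟩ := BD.sgnPow_word n'' (TensorDGA.homog_mixList hp' hp'')
  obtain ⟨c₂, hc₂⟩ := GD.Emu_mixList a' hp' hp'' hp
  obtain ⟨c₃, hc₃⟩ := BD.sgnPow_word n''
    (TensorDGA.homog_mixList (hw'.take k) (hw''.take k))
  obtain ⟨c₄, hc₄⟩ := GD.muE_mixList a'' (hw'.drop k) (hw''.drop k) (by simp [hw])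
  simp only [TensorProduct.assoc_tmul, TensorProduct.map_tmul, LinearMap.comp_apply,
    LinearMap.id_coe, id_eq, LinearMap.mul'_apply, TensorDGA.take_mixList,
    TensorDGA.drop_mixList, hc₁, map_smul, hc₂, hc₃, hc₄,
    ← TensorProduct.smul_tmul', TensorProduct.tmul_smul, smul_smul]
  exact N.smul_mem _ (h k)

lemma GData.G_cons_mixList_mem {n' n'' : ℤ} {a' : A'.carrier} {a'' : A''.carrier}
    (ha' : a' ∈ A'.grading n') (ha'' : a'' ∈ A''.grading n'')
    {r' : List A'.carrier} {r'' : List A''.carrier} {rs' rs'' : List ℤ}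
    (hr' : A'.Homog r' rs') (hr'' : A''.Homog r'' rs'') (hr : r'.length = r''.length)
    (hr_ne : r' ≠ []) {big one : List A'.carrier → List A''.carrier → Prop}
    (hG : ∀ (q' : List A'.carrier) (q'' : List A''.carrier) (qs' qs'' : List ℤ),
      A'.Homog q' qs' → A''.Homog q'' qs'' → q'.length = q''.length →
      GD.G (T.A.word (T.mixList r' r'')) (T.A.word (T.mixList q' q'')) ∈
        Submodule.span R (admissibleTerms T (big q' q'') (one q' q'')))
    {m' : List A'.carrier} {m'' : List A''.carrier} {es' es'' : List ℤ}
    (hm' : A'.Homog m' es') (hm'' : A''.Homog m'' es'') (hm : m'.length = m''.length)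
    {N : Submodule R (T.A.carrier ⊗[R] (T.A.Bar ⊗[R] T.A.carrier))}
    (h : ∀ (i j : ℕ) (x' : A'.carrier) (x'' : A''.carrier) (ix' ix'' : ℤ)
      (v' : List A'.carrier) (v'' : List A''.carrier) (fs' fs'' : List ℤ) (d : T.A.carrier),
      x' ∈ A'.grading ix' → x'' ∈ A''.grading ix'' →
      A'.Homog v' fs' → A''.Homog v'' fs'' → v'.length = v''.length →
      (one ((m'.drop i).drop j) ((m''.drop i).drop j) → x'' = 1 ∨ 1 ∈ v'') → ∀ k,
      emuValue T E' a' (m'.take i) (m''.take i) ⊗ₜ[R]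
        (T.A.word (T.mixList (((m'.drop i).take j ++ x' :: v').take k)
          (((m''.drop i).take j ++ x'' :: v'').take k)) ⊗ₜ[R]
        (mueValue T E'' a'' (((m'.drop i).take j ++ x' :: v').drop k)
          (((m''.drop i).take j ++ x'' :: v'').drop k) * d)) ∈ N) :
    GD.G (T.A.word (T.e.symm (a' ⊗ₜ[R] a'') :: T.mixList r' r''))
      (T.A.word (T.mixList m' m'')) ∈ N := by
  rw [GD.G_cons a' a'' _ _ ha' ha'' (TensorDGA.homog_mixList hr' hr'')
    (by rwa [Ne, TensorDGA.mixList_eq_nil_iff hr])]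
  simp only [Mop, LinearMap.comp_apply]
  rw [BD.map_id_Δ_comp_Δ_word, map_sum, map_sum, map_sum]
  refine Submodule.sum_mem _ fun i _ => ?_
  rw [map_sum, map_sum, map_sum]
  refine Submodule.sum_mem _ fun j _ => ?_
  simp only [TensorProduct.map_tmul, LinearMap.comp_apply, TensorDGA.take_mixList,
    TensorDGA.drop_mixList, LinearMap.id_coe, id_eq]
  have hX := hG _ _ _ _ ((hm'.drop i).drop j) ((hm''.drop i).drop j) (by simp [hm])
  generalize GD.G (T.A.word (T.mixList r' r'')) _ = X at hX ⊢
  induction hX using Submodule.span_induction with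
  | zero => simp
  | add x y _ _ hx hy => simpa only [map_add, TensorProduct.tmul_add] using N.add_mem hx hy
  | smul c x _ hx => simpa only [map_smul, TensorProduct.tmul_smul] using N.smul_mem c hx
  | mem t ht =>
    obtain ⟨x', x'', ix', ix'', v', v'', fs', fs'', d, hx', hx'', hv', hv'', hv, rfl, -, hone,
      -⟩ := ht
    obtain ⟨c₁, hc₁⟩ := BD.sgnPow_word (bdeg (List.zipWith (· + ·) rs' rs'') + 1 - 1)
      (TensorDGA.homog_mixList (hm'.take i) (hm''.take i))
    obtain ⟨c₂, hc₂⟩ := BD.sgnPow_word (bdeg (List.zipWith (· + ·) rs' rs'') + 1 - 1)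
      (TensorDGA.homog_mixList ((hm'.drop i).take j) ((hm''.drop i).take j))
    simp only [TensorProduct.map_tmul, LinearMap.comp_apply, LinearMap.id_coe, id_eq,
      LinearEquiv.coe_coe, TensorProduct.assoc_symm_tmul, DGAlgebra.concat, LinearMap.mul'_apply,
      hc₁, hc₂, smul_mul_assoc, mul_assoc, ← DGAlgebra.word_cons, ← DGAlgebra.word_append]
    rw [← TensorDGA.mixList_cons, ← TensorDGA.mixList_append _ _ (by simp [hm])]
    simp only [map_smul, ← TensorProduct.smul_tmul', TensorProduct.tmul_smul]
    exact N.smul_mem _ (N.smul_mem _ (GD.Emu_tmul_Δ_mixList_mem a' a'' n''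
      (hm'.take i) (hm''.take i) (by simp [hm]) (((hm'.drop i).take j).append (.cons hx' hv'))
      (((hm''.drop i).take j).append (.cons hx'' hv'')) (by simp [hm, hv]) d
      (h i j x' x'' ix' ix'' v' v'' fs' fs'' d hx' hx'' hv' hv'' hv hone)))

lemma GData.G_single_mem_span_admissibleTerms (hE' : IsTwistingCochain BD' E')
    (hN' : IsNormalized E') (hN'' : IsNormalized E'') {n' n'' : ℤ} {a' : A'.carrier}
    {a'' : A''.carrier} (ha' : a' ∈ A'.grading n') (ha'' : a'' ∈ A''.grading n'')
    {m' : List A'.carrier} {m'' : List A''.carrier} {es' es'' : List ℤ}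
    (hm' : A'.Homog m' es') (hm'' : A''.Homog m'' es'') (hm : m'.length = m''.length) :
    GD.G (T.A.word (T.mixList [a'] [a''])) (T.A.word (T.mixList m' m'')) ∈
      Submodule.span R (admissibleTerms T (1 < [a'].length + m'.length)
        ((1, 1) ∈ [a'].zip [a''] ∨ (1, 1) ∈ m'.zip m'')) := by
  refine GD.G_single_mixList_mem ha' ha'' hm' hm'' hm fun i j => ?_
  have hbig : 1 < [a'].length + m'.length → m'.take i = [] → m'.drop i ≠ [] := by
    intro hbig htake hdrop
    rw [← List.take_append_drop i m', htake, hdrop] at hbig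
    simp at hbig
  have hone : (1, 1) ∈ [a'].zip [a''] ∨ (1, 1) ∈ m'.zip m'' →
      1 ∈ m'.take i ∨ (a' = 1 ∧ a'' = 1) ∨ 1 ∈ m''.drop i := by
    rintro (h | h)
    · exact .inr (.inl (by simpa [eq_comm] using h))
    · rcases List.mem_zip_take_or_mem_zip_drop i h with h | h
      · exact .inl (List.of_mem_zip h).1
      · exact .inr (.inr (List.of_mem_zip h).2)
  simpa only [mul_one] using emuValue_tmul_mem_span_admissibleTerms hE' hN' hN'' a'' ha'
    (hm'.take i) (hm''.take i) (by simp [hm]) (hm'.drop i) (hm''.drop i) (by simp [hm]) j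
    (1 : T.A.carrier) hbig hone

lemma GData.G_cons_mem_span_admissibleTerms (hE' : IsTwistingCochain BD' E')
    (hN' : IsNormalized E') (hN'' : IsNormalized E'') {n' n'' : ℤ} {a' : A'.carrier}
    {a'' : A''.carrier} (ha' : a' ∈ A'.grading n') (ha'' : a'' ∈ A''.grading n'')
    {r' : List A'.carrier} {r'' : List A''.carrier} {rs' rs'' : List ℤ}
    (hr' : A'.Homog r' rs') (hr'' : A''.Homog r'' rs'') (hr : r'.length = r''.length)
    (hr_ne : r' ≠ [])
    (ih : ∀ (q' : List A'.carrier) (q'' : List A''.carrier) (qs' qs'' : List ℤ),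
      A'.Homog q' qs' → A''.Homog q'' qs'' → q'.length = q''.length →
      GD.G (T.A.word (T.mixList r' r'')) (T.A.word (T.mixList q' q'')) ∈
        Submodule.span R (admissibleTerms T (1 < r'.length + q'.length)
          ((1, 1) ∈ r'.zip r'' ∨ (1, 1) ∈ q'.zip q'')))
    {m' : List A'.carrier} {m'' : List A''.carrier} {es' es'' : List ℤ}
    (hm' : A'.Homog m' es') (hm'' : A''.Homog m'' es'') (hm : m'.length = m''.length) :
    GD.G (T.A.word (T.mixList (a' :: r') (a'' :: r''))) (T.A.word (T.mixList m' m'')) ∈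
      Submodule.span R (admissibleTerms T (1 < (a' :: r').length + m'.length)
        ((1, 1) ∈ (a' :: r').zip (a'' :: r'') ∨ (1, 1) ∈ m'.zip m'')) := by
  refine GD.G_cons_mixList_mem ha' ha'' hr' hr'' hr hr_ne ih hm' hm'' hm
    fun i j x' x'' ix' ix'' v' v'' fs' fs'' d hx' hx'' hv' hv'' hv hone_rest k => ?_
  -- a unit entry of `r` or of the last part of `m` has gone to `x''` or `v''` by `ih`
  have hw : (1, 1) ∈ r'.zip r'' ∨ (1, 1) ∈ ((m'.drop i).drop j).zip ((m''.drop i).drop j) →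
      1 ∈ (m''.drop i).take j ++ x'' :: v'' := fun h => by
    rcases hone_rest h with rfl | h
    · simp
    · simp [h]
  refine emuValue_tmul_mem_span_admissibleTerms hE' hN' hN'' a'' ha'
    (hm'.take i) (hm''.take i) (by simp [hm])
    (((hm'.drop i).take j).append (.cons hx' hv'))
    (((hm''.drop i).take j).append (.cons hx'' hv'')) (by simp [hm, hv]) k d
    (fun _ _ => by simp) fun hone => ?_
  rcases hone with h | h
  · rw [List.zip_cons_cons, List.mem_cons] at h
    rcases h with h | h
    · exact .inr (.inl (by simpa [eq_comm] using h))
    · exact .inr (.inr (hw (.inl h)))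
  · rcases List.mem_zip_take_or_mem_zip_drop i h with h | h
    · exact .inl (List.of_mem_zip h).1
    · rcases List.mem_zip_take_or_mem_zip_drop j h with h | h
      · exact .inr (.inr (List.mem_append_left _ (List.of_mem_zip h).2))
      · exact .inr (.inr (hw (.inr h)))

theorem GData.G_mixList_mem_span_admissibleTerms (hE' : IsTwistingCochain BD' E')
    (hN' : IsNormalized E') (hN'' : IsNormalized E'')
    {l' : List A'.carrier} {l'' : List A''.carrier} {ds' ds'' : List ℤ} (hl_ne : l' ≠ [])
    (hl' : A'.Homog l' ds') (hl'' : A''.Homog l'' ds'') (hl : l'.length = l''.length)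
    {m' : List A'.carrier} {m'' : List A''.carrier} {es' es'' : List ℤ}
    (hm' : A'.Homog m' es') (hm'' : A''.Homog m'' es'') (hm : m'.length = m''.length) :
    GD.G (T.A.word (T.mixList l' l'')) (T.A.word (T.mixList m' m'')) ∈
      Submodule.span R (admissibleTerms T (1 < l'.length + m'.length)
        ((1, 1) ∈ l'.zip l'' ∨ (1, 1) ∈ m'.zip m'')) := by
  induction l' generalizing l'' ds' ds'' m' m'' es' es'' with
  | nil => exact absurd rfl hl_ne
  | cons a' r' ih =>
    obtain ⟨a'', r'', rfl⟩ := List.exists_cons_of_length_eq_add_one hl.symm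
    obtain ⟨n', rs', rfl, ha', hr'⟩ := hl'.of_cons
    obtain ⟨n'', rs'', rfl, ha'', hr''⟩ := hl''.of_cons
    have hr : r'.length = r''.length := by simpa using hl
    rcases eq_or_ne r' [] with rfl | hr_ne
    · obtain rfl : r'' = [] := List.eq_nil_of_length_eq_zero hr.symm
      exact GD.G_single_mem_span_admissibleTerms hE' hN' hN'' ha' ha'' hm' hm'' hm
    · exact GD.G_cons_mem_span_admissibleTerms hE' hN' hN'' ha' ha'' hr' hr'' hr hr_ne
        (fun _ _ _ _ hq' hq'' hq => ih hr_ne hr' hr'' hr hq' hq'' hq) hm' hm'' hm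

lemma Econstr_word_tmul_word (l m : List T.A.carrier) :
    Econstr GD (T.A.word l ⊗ₜ[R] T.A.word m) =
      εBAAA T BD (GD.G (T.A.word l) (T.A.word m)) +
        BD.εB (T.A.word l) • BD.α (T.A.word m) := by
  simp [Econstr]

lemma Econstr_one_tmul (b : T.A.Bar) : Econstr GD (1 ⊗ₜ[R] b) = BD.α b := by
  simp [Econstr, show GD.G 1 = 0 from GD.G_nil, BD.εB_one]

lemma Econstr_word_one_tmul_one (hN' : IsNormalized E') (hN'' : IsNormalized E'') :
    Econstr GD (T.A.word [(1 : T.A.carrier)] ⊗ₜ[R] (1 : T.A.Bar)) = 1 := by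
  rw [← DGAlgebra.word_nil, Econstr_word_tmul_word, BD.εB_word _ (List.cons_ne_nil _ _),
    zero_smul, add_zero, show [(1 : T.A.carrier)] = [T.e.symm (1 ⊗ₜ[R] 1)] by rw [T.one_def],
    GD.G_single _ _ A'.one_mem A''.one_mem]
  simp [Gone, BD.Δ_one, BD.sgnPow_one, GD.Emu_one, GD.muE_one, hN'.one_right, hN''.one_right,
    T.one_def, εBAAA_tmul, BD.εB_one]

lemma Econstr_mixList_tmul_eq_εBAAA {l' : List A'.carrier} {l'' : List A''.carrier}
    (hl_ne : l' ≠ []) (hl : l'.length = l''.length) (m : List T.A.carrier) :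
    Econstr GD (T.A.word (T.mixList l' l'') ⊗ₜ[R] T.A.word m) =
      εBAAA T BD (GD.G (T.A.word (T.mixList l' l'')) (T.A.word m)) := by
  rw [Econstr_word_tmul_word, BD.εB_word _ (by rwa [Ne, TensorDGA.mixList_eq_nil_iff hl]),
    zero_smul, add_zero]

theorem Econstr_eq_zero_of_one_mem (hE' : IsTwistingCochain BD' E') (hN' : IsNormalized E')
    (hN'' : IsNormalized E'') (l m : List T.A.carrier) (hbig : 1 < l.length + m.length)
    (hone : 1 ∈ l ∨ 1 ∈ m) : Econstr GD (T.A.word l ⊗ₜ[R] T.A.word m) = 0 := by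
  rcases eq_or_ne l [] with rfl | hl_ne
  · rw [DGAlgebra.word_nil, Econstr_one_tmul, BD.α_word m (by simp at hbig; omega)]
  refine (Submodule.mem_bot R).1
    (TensorDGA.tmul_word_mem_of_refines ⊥ _ l m fun l₂ m₂ hl₂ hm₂ => ?_)
  obtain ⟨l', l'', _, _, hl', hl'', hl, hl_len, rfl, hone_l⟩ :=
    TensorDGA.exists_mixList_of_refines hl₂
  obtain ⟨m', m'', _, _, hm', hm'', hm, hm_len, rfl, hone_m⟩ :=
    TensorDGA.exists_mixList_of_refines hm₂
  have hl_ne' : l' ≠ [] := by rintro rfl; exact hl_ne (List.eq_nil_of_length_eq_zero hl_len.symm)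
  rw [Submodule.mem_bot, Econstr_mixList_tmul_eq_εBAAA GD hl_ne' hl]
  exact εBAAA_eq_zero_of_mem_span (by omega) (hone.imp hone_l hone_m)
    (GD.G_mixList_mem_span_admissibleTerms hE' hN' hN'' hl_ne' hl' hl'' hl hm' hm'' hm)

theorem aug_Econstr_word_tmul_word (hE' : IsTwistingCochain BD' E') (hN' : IsNormalized E')
    (hN'' : IsNormalized E'') (l m : List T.A.carrier) (hbig : 1 < l.length + m.length) :
    T.A.aug (Econstr GD (T.A.word l ⊗ₜ[R] T.A.word m)) = 0 := by
  rcases eq_or_ne l [] with rfl | hl_ne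
  · rw [DGAlgebra.word_nil, Econstr_one_tmul, BD.α_word m (by simp at hbig; omega), map_zero]
  refine (Submodule.mem_bot R).1 (TensorDGA.tmul_word_mem_of_refines ⊥
    (T.A.aug.toLinearMap ∘ₗ Econstr GD) l m fun l₂ m₂ hl₂ hm₂ => ?_)
  obtain ⟨l', l'', _, _, hl', hl'', hl, hl_len, rfl, -⟩ :=
    TensorDGA.exists_mixList_of_refines hl₂
  obtain ⟨m', m'', _, _, hm', hm'', hm, hm_len, rfl, -⟩ :=
    TensorDGA.exists_mixList_of_refines hm₂
  have hl_ne' : l' ≠ [] := by rintro rfl; exact hl_ne (List.eq_nil_of_length_eq_zero hl_len.symm)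
  rw [Submodule.mem_bot, LinearMap.comp_apply, Econstr_mixList_tmul_eq_εBAAA GD hl_ne' hl]
  exact aug_εBAAA_of_mem_span (by omega)
    (GD.G_mixList_mem_span_admissibleTerms hE' hN' hN'' hl_ne' hl' hl'' hl hm' hm'' hm)

end Normalization

theorem Econstr_isNormalized_general {R : Type} [CommRing R] {A' A'' : DGAlgebra R}
    (BD' : BarData A') (BD'' : BarData A'') (T : TensorDGA A' A'') (BD : BarData T.A)
    (E' : A'.Bar ⊗[R] A'.Bar →ₗ[R] A'.carrier)
    (E'' : A''.Bar ⊗[R] A''.Bar →ₗ[R] A''.carrier)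
    (hE' : IsTwistingCochain BD' E')
    (hN' : IsNormalized E') (hN'' : IsNormalized E'')
    (GD : GData BD' BD'' T BD E' E'') :
    IsNormalized (Econstr GD) :=
  ⟨Econstr_word_one_tmul_one GD hN' hN'', by rw [Econstr_one_tmul, BD.α_single],
    Econstr_eq_zero_of_one_mem GD hE' hN' hN'', aug_Econstr_word_tmul_word GD hE' hN' hN''⟩

/-- Let `A'`, `A''` be augmented dg algebras with level-3 twisting
cochains `E'`, `E''`, set `A = A' ⊗ A''`, and let `E : BA ⊗ BA → A` be the twisting
cochain `E(a,b) = ε_{B(A,A,A)}(G_a(b))` (with `E(𝟙,-) = α`) of the construction.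
If `E'` and `E''` are normalized, then `E` is normalized: `E([1],𝟙) = E(𝟙,[1]) = 1`;
`E(a,b) = 0` whenever the total bar length is `> 1` and some entry `aᵢ` or `bⱼ` equals
`1 ∈ A`; and `E(a,b)` lies in the augmentation ideal `Ā` whenever the total bar length
is `> 1`. -/
theorem Econstr_isNormalized {R : Type} [CommRing R] {A' A'' : DGAlgebra R}
    (BD' : BarData A') (BD'' : BarData A'') (T : TensorDGA A' A'') (BD : BarData T.A)
    (E' : A'.Bar ⊗[R] A'.Bar →ₗ[R] A'.carrier)
    (E'' : A''.Bar ⊗[R] A''.Bar →ₗ[R] A''.carrier)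
    (hE' : IsTwistingCochain BD' E') (hE'' : IsTwistingCochain BD'' E'')
    (h3' : IsLevel3 E') (h3'' : IsLevel3 E'')
    (hN' : IsNormalized E') (hN'' : IsNormalized E'')
    (GD : GData BD' BD'' T BD E' E'') :
    IsNormalized (Econstr GD) :=
  Econstr_isNormalized_general BD' BD'' T BD E' E'' hE' hN' hN'' GD
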